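/- For a geometrically uniform state set with W = Σ_i U_iφφ*U_i* positive definite, the least-squares measurement factors are geometrically uniform with the same generating group: μ_i := W^{-1/2}U_iφ = U_iμ where μ = W^{-1/2}φ; hence the LSM operators satisfy Σ_i = μ_iμ_i* = U_i(μμ*)U_i*. -/

import Mathlib

open Matrix
open scoped ComplexOrder

/-- The positive semidefinite square root of a positive semidefinite matrix
(the definition `Matrix.PosSemidef.sqrt` of the older Mathlib, removed since). -/
noncomputable def Matrix.PosSemidef.sqrt {n 𝕜 : Type*} [Fintype n] [RCLike 𝕜] [DecidableEq n]
    {A : Matrix n n 𝕜} (hA : A.PosSemidef) : Matrix n n 𝕜 :=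
  hA.1.eigenvectorUnitary.1 * diagonal ((↑) ∘ (√·) ∘ hA.1.eigenvalues) *
    (star hA.1.eigenvectorUnitary : Matrix n n 𝕜)

section sqrtPort
open scoped MatrixOrder

lemma Matrix.PosSemidef.sqrt_eq_cfc_sqrt {n 𝕜 : Type*} [Fintype n] [RCLike 𝕜] [DecidableEq n]
    {A : Matrix n n 𝕜} (hA : A.PosSemidef) : hA.sqrt = CFC.sqrt A := by
  rw [CFC.sqrt_eq_real_sqrt A hA.nonneg, cfcₙ_eq_cfc, hA.1.cfc_eq]
  simp [Matrix.IsHermitian.cfc, Matrix.PosSemidef.sqrt]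

lemma Matrix.PosSemidef.posSemidef_sqrt {n 𝕜 : Type*} [Fintype n] [RCLike 𝕜] [DecidableEq n]
    {A : Matrix n n 𝕜} (hA : A.PosSemidef) : hA.sqrt.PosSemidef := by
  rw [hA.sqrt_eq_cfc_sqrt]
  exact (CFC.sqrt_nonneg A).posSemidef

lemma Matrix.PosSemidef.sqrt_mul_self {n 𝕜 : Type*} [Fintype n] [RCLike 𝕜] [DecidableEq n]
    {A : Matrix n n 𝕜} (hA : A.PosSemidef) : hA.sqrt * hA.sqrt = A := by
  rw [hA.sqrt_eq_cfc_sqrt]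
  exact CFC.sqrt_mul_sqrt_self A hA.nonneg

lemma Matrix.PosSemidef.eq_sqrt_of_sq_eq {n 𝕜 : Type*} [Fintype n] [RCLike 𝕜] [DecidableEq n]
    {A B : Matrix n n 𝕜} (hB : B.PosSemidef) (hA : A.PosSemidef) (h : B ^ 2 = A) :
    B = hA.sqrt := by
  rw [hA.sqrt_eq_cfc_sqrt]
  exact ((CFC.sqrt_eq_iff A B hA.nonneg hB.nonneg).mpr (by rw [← sq]; exact h)).symm

end sqrtPort

/-- for a geometrically uniform state set with `W = ∑_i U_i φ φ* U_i*`
positive definite, the LSM factors are geometrically uniform with the same generating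
group: `μ_i = W^{-1/2} U_i φ = U_i μ` with `μ = W^{-1/2} φ`, and hence the LSM operators
satisfy `Σ_i = μ_i μ_i* = U_i (μ μ*) U_i*`. -/
theorem gu_lsm_factors_are_gu (n m k : ℕ) [NeZero m]
    (U : Fin m → Matrix (Fin n) (Fin n) ℂ)
    (hUunit : ∀ i, U i ∈ Matrix.unitaryGroup (Fin n) ℂ)
    (hUinj : Function.Injective U)
    (hUone : U 0 = 1)
    (hUmul : ∀ i j, ∃ t, U i * U j = U t)
    (hUinv : ∀ i, ∃ j, (U i)ᴴ = U j)
    (φ : Matrix (Fin n) (Fin k) ℂ)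
    (W : Matrix (Fin n) (Fin n) ℂ)
    (hWdef : W = ∑ i, U i * (φ * φᴴ) * (U i)ᴴ) (hW : W.PosDef)
    (μ : Fin m → Matrix (Fin n) (Fin k) ℂ)
    (hμ : ∀ i, μ i = (hW.posSemidef.sqrt)⁻¹ * (U i * φ)) :
    (∀ i, μ i = U i * ((hW.posSemidef.sqrt)⁻¹ * φ)) ∧
    (∀ i, μ i * (μ i)ᴴ =
      U i * (((hW.posSemidef.sqrt)⁻¹ * φ) * ((hW.posSemidef.sqrt)⁻¹ * φ)ᴴ) * (U i)ᴴ) := by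
  set S := hW.posSemidef.sqrt with hS
  have hUU : ∀ i, (U i)ᴴ * U i = 1 := fun i => (hUunit i).1
  have hUU' : ∀ i, U i * (U i)ᴴ = 1 := fun i => (hUunit i).2
  -- W is invariant under conjugation by each U i
  have hWinv : ∀ i, U i * W * (U i)ᴴ = W := by
    intro i
    -- the map j ↦ t with U i * U j = U t is a bijection
    have hmul : ∀ j, U i * U j = U (Classical.choose (hUmul i j)) :=
      fun j => Classical.choose_spec (hUmul i j)
    set e : Fin m → Fin m := fun j => Classical.choose (hUmul i j) with he
    have heinj : Function.Injective e := by
      intro a b hab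
      apply hUinj
      have : U i * U a = U i * U b := by rw [hmul a, hmul b]; exact congrArg U hab
      calc U a = (U i)ᴴ * (U i * U a) := by rw [← mul_assoc, hUU, one_mul]
        _ = (U i)ᴴ * (U i * U b) := by rw [this]
        _ = U b := by rw [← mul_assoc, hUU, one_mul]
    have hebij : Function.Bijective e := Finite.injective_iff_bijective.mp heinj
    calc U i * W * (U i)ᴴ
        = ∑ j, (U i * U j) * (φ * φᴴ) * (U i * U j)ᴴ := by
          rw [hWdef, Finset.mul_sum, Finset.sum_mul]
          refine Finset.sum_congr rfl fun j _ => ?_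
          simp only [conjTranspose_mul]
          noncomm_ring
      _ = ∑ j, U (e j) * (φ * φᴴ) * (U (e j))ᴴ := by
          refine Finset.sum_congr rfl fun j _ => ?_
          rw [hmul j]
      _ = ∑ j, U j * (φ * φᴴ) * (U j)ᴴ :=
          Function.Bijective.sum_comp hebij (fun j => U j * (φ * φᴴ) * (U j)ᴴ)
      _ = W := hWdef.symm
  -- hence sqrt commutes with each U i
  have hScomm : ∀ i, U i * S = S * U i := by
    intro i
    have hB : (U i * S * (U i)ᴴ) = S := by
      have hpsd : PosSemidef (U i * S * (U i)ᴴ) := by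
        have := hW.posSemidef.posSemidef_sqrt.conjTranspose_mul_mul_same (U i)ᴴ
        simpa using this
      have hsq : (U i * S * (U i)ᴴ) ^ 2 = W := by
        have : (U i * S * (U i)ᴴ) * (U i * S * (U i)ᴴ) = U i * W * (U i)ᴴ := by
          calc (U i * S * (U i)ᴴ) * (U i * S * (U i)ᴴ)
              = U i * S * ((U i)ᴴ * U i) * S * (U i)ᴴ := by noncomm_ring
            _ = U i * (S * S) * (U i)ᴴ := by rw [hUU]; noncomm_ring
            _ = U i * W * (U i)ᴴ := by rw [hW.posSemidef.sqrt_mul_self]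
        rw [pow_two, this, hWinv]
      have := hpsd.eq_sqrt_of_sq_eq hW.posSemidef hsq
      rw [← hS] at this
      exact this
    calc U i * S = U i * S * ((U i)ᴴ * U i) := by rw [hUU, mul_one]
      _ = (U i * S * (U i)ᴴ) * U i := by noncomm_ring
      _ = S * U i := by rw [hB]
  -- S is invertible
  have hdet : IsUnit S.det := by
    have h2 : S.det * S.det = W.det := by
      rw [← det_mul, hW.posSemidef.sqrt_mul_self]
    have hWdet : W.det ≠ 0 := hW.det_pos.ne'
    exact isUnit_iff_ne_zero.mpr fun h => hWdet (by rw [← h2, h, mul_zero])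
  have hSinvcomm : ∀ i, S⁻¹ * U i = U i * S⁻¹ := by
    intro i
    calc S⁻¹ * U i = S⁻¹ * U i * (S * S⁻¹) := by rw [mul_nonsing_inv S hdet, mul_one]
      _ = S⁻¹ * (U i * S) * S⁻¹ := by noncomm_ring
      _ = S⁻¹ * (S * U i) * S⁻¹ := by rw [hScomm]
      _ = (S⁻¹ * S) * (U i * S⁻¹) := by noncomm_ring
      _ = U i * S⁻¹ := by rw [nonsing_inv_mul S hdet, one_mul]
  have h1 : ∀ i, μ i = U i * (S⁻¹ * φ) := by
    intro i
    rw [hμ i, ← Matrix.mul_assoc, hSinvcomm i, Matrix.mul_assoc]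
  refine ⟨h1, fun i => ?_⟩
  rw [h1 i]
  simp only [conjTranspose_mul, Matrix.mul_assoc]
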